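/- arXiv:2505.08551 — 2 statements merged into one kernel-verified Lean document; each statement's English description precedes it below -/
import Mathlib

section
/- In PG(2,q) with q even and k ≠ 0, the conic D_k = V(kxy + z² + xz) is nondegenerate with nucleus (0 : 1 : k), and for distinct nonzero a, b ∈ GF(q), the conics D_a and D_b intersect exactly in the three points (1:0:0), (0:1:0), (1:0:1). -/
/-- The point type of `PG(2,q)` over the field `F`: the projectivization of `F³`.
We also use this type for lines, via line coordinates. -/
abbrev PG2 (F : Type) [Field F] : Type := Projectivization F (Fin 3 → F)

/-- A point of `PG(2,q)` with homogeneous coordinates `(x : y : z)`. -/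
noncomputable def pt {F : Type} [Field F] (x y z : F) (h : ![x, y, z] ≠ 0) : PG2 F :=
  Projectivization.mk F ![x, y, z] h

lemma vec_ne_zero {F : Type} [Field F] {x y z : F} (i : Fin 3) (h : ![x, y, z] i ≠ 0) :
    ![x, y, z] ≠ 0 := fun hz => h (by simp [hz])

/-- Incidence between a line `l` (in line coordinates) and a point `P`. This is well defined:
the pairing is bilinear, so its vanishing is independent of the choice of representatives. -/
def inc {F : Type} [Field F] (l P : PG2 F) : Prop :=
  l.rep 0 * P.rep 0 + l.rep 1 * P.rep 1 + l.rep 2 * P.rep 2 = 0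

/-- A set of points is untouchable if no line meets it in exactly one point. -/
def Untouchable {F : Type} [Field F] (S : Set (PG2 F)) : Prop :=
  ∀ l : PG2 F, {P ∈ S | inc l P}.ncard ≠ 1

/-- A line `l` is tangent to a point set `S` if it meets `S` in exactly one point. -/
def IsTangent {F : Type} [Field F] (l : PG2 F) (S : Set (PG2 F)) : Prop :=
  {P ∈ S | inc l P}.ncard = 1

/-- A nondegenerate conic in `PG(2,q)` is, combinatorially, an oval: a set of `q + 1` points
met by every line in at most `2` points. -/
def IsOval {F : Type} [Field F] (q : ℕ) (S : Set (PG2 F)) : Prop :=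
  S.ncard = q + 1 ∧ ∀ l : PG2 F, {P ∈ S | inc l P}.ncard ≤ 2

/-- The conic `D_k = V(kxy + z² + xz)`. -/
def Dk {F : Type} [Field F] (k : F) : Set (PG2 F) :=
  {P | k * P.rep 0 * P.rep 1 + P.rep 2 ^ 2 + P.rep 0 * P.rep 2 = 0}

/-!
Away from `(0 : 1 : 0)` the conic `D_k` is the graph `y = -(z² + z)/k` over the affine chart
`x = 1`, so `Option F` parametrizes it and it has `q + 1` points. Substituting this
parametrization into the equation of a line gives a binary quadratic form, which has at most two
projective zeros, and exactly one only when its discriminant vanishes; in characteristic `2` the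
discriminant of the form cut out on a line `l` is `(k l₂ - l₁)²`, so tangents pass through
`(0 : 1 : k)`. Finally `D_a ∩ D_b` lies on `(a - b) x y = 0`, which meets `D_a` in
`(0 : 1 : 0)` and in the points with `y = 0`, `z (z + x) = 0`.
-/

lemma charP_two_of_even_card {F : Type} [Field F] [Fintype F] (h : Even (Fintype.card F)) :
    CharP F 2 :=
  ringChar.of_eq (FiniteField.even_card_iff_char_two.2 (Nat.even_iff.1 h))

section BinaryForm

variable {F : Type} [Field F] {a b c : F}

/-- Projective zeros of the binary quadratic form `a s² + b s t + c t²`, where `none` stands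
for `(1 : 0)` and `some z` for `(z : 1)`. -/
def binaryZeros (a b c : F) : Set (Option F) :=
  {o | o.elim (a = 0) fun z => a * z ^ 2 + b * z + c = 0}

@[simp]
lemma none_mem_binaryZeros : none ∈ binaryZeros a b c ↔ a = 0 := Iff.rfl

@[simp]
lemma some_mem_binaryZeros {z : F} : some z ∈ binaryZeros a b c ↔ a * z ^ 2 + b * z + c = 0 :=
  Iff.rfl

lemma eq_or_eq_of_some_mem_binaryZeros (ha : a ≠ 0) {z₀ z : F}
    (hz₀ : some z₀ ∈ binaryZeros a b c) (hz : some z ∈ binaryZeros a b c) :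
    z = z₀ ∨ z = -b / a - z₀ := by
  rw [some_mem_binaryZeros] at hz₀ hz
  have hfactor : (z - z₀) * (a * (z + z₀) + b) = 0 := by linear_combination hz - hz₀
  refine (mul_eq_zero.1 hfactor).imp sub_eq_zero.1 fun h => ?_
  field_simp
  linear_combination h

lemma some_neg_div_sub_mem_binaryZeros (ha : a ≠ 0) {z₀ : F} (hz₀ : some z₀ ∈ binaryZeros a b c) :
    some (-b / a - z₀) ∈ binaryZeros a b c := by
  rw [some_mem_binaryZeros] at hz₀ ⊢
  field_simp
  linear_combination a * hz₀

lemma ncard_binaryZeros_le_two (h : a ≠ 0 ∨ b ≠ 0 ∨ c ≠ 0) : (binaryZeros a b c).ncard ≤ 2 := by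
  suffices ∃ o₁ o₂, binaryZeros a b c ⊆ {o₁, o₂} by
    obtain ⟨o₁, o₂, hsub⟩ := this
    exact (Set.ncard_le_ncard hsub (Set.toFinite _)).trans
      ((Set.ncard_insert_le _ _).trans (by simp))
  by_cases ha : a = 0
  · refine ⟨none, some (-c / b), ?_⟩
    rintro (_ | z) hz
    · simp
    · rw [some_mem_binaryZeros, ha] at hz
      have hb : b ≠ 0 := by
        rintro rfl
        simp_all
      right
      simp only [Set.mem_singleton_iff, Option.some.injEq]
      field_simp
      linear_combination hz
  · by_cases hroot : ∃ z₀, some z₀ ∈ binaryZeros a b c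
    · obtain ⟨z₀, hz₀⟩ := hroot
      refine ⟨some z₀, some (-b / a - z₀), ?_⟩
      rintro (_ | z) hz
      · exact absurd hz ha
      · simpa using eq_or_eq_of_some_mem_binaryZeros ha hz₀ hz
    · refine ⟨none, none, ?_⟩
      rintro (_ | z) hz
      · exact absurd hz ha
      · exact absurd ⟨z, hz⟩ hroot

lemma discrim_eq_zero_of_ncard_binaryZeros_eq_one (h : (binaryZeros a b c).ncard = 1) :
    b ^ 2 = 4 * a * c := by
  obtain ⟨o, ho⟩ := Set.ncard_eq_one.1 h
  have hmem : ∀ o', o' ∈ binaryZeros a b c ↔ o' = o := fun o' => by rw [ho]; rfl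
  by_cases ha : a = 0
  · suffices hb : b = 0 by rw [ha, hb]; ring
    by_contra hb
    have hroot : some (-c / b) ∈ binaryZeros a b c := by
      rw [some_mem_binaryZeros, ha]
      field_simp
      ring
    exact Option.some_ne_none _ (((hmem _).1 hroot).trans ((hmem none).1 ha).symm)
  · cases o with
    | none => exact absurd ((hmem none).2 rfl) ha
    | some z₀ =>
      have hz₀ : some z₀ ∈ binaryZeros a b c := (hmem _).2 rfl
      have hpartner := Option.some.inj ((hmem _).1 (some_neg_div_sub_mem_binaryZeros ha hz₀))
      rw [some_mem_binaryZeros] at hz₀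
      field_simp at hpartner
      linear_combination -(b + 2 * a * z₀) * hpartner - 4 * a * hz₀

end BinaryForm

section Conic

variable {F : Type} [Field F]

lemma rep_ne_zero_coord (P : PG2 F) : P.rep 0 ≠ 0 ∨ P.rep 1 ≠ 0 ∨ P.rep 2 ≠ 0 := by
  by_contra! h
  apply P.rep_nonzero
  funext i
  fin_cases i
  exacts [h.1, h.2.1, h.2.2]

lemma exists_rep_pt_eq_smul (x y z : F) (h : ![x, y, z] ≠ 0) :
    ∃ u : Fˣ, (pt x y z h).rep = u • ![x, y, z] :=
  (Projectivization.exists_smul_eq_mk_rep F _ h).imp fun _ hu => hu.symm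

lemma eq_pt_of_rep_proportional (P : PG2 F) {x y z : F} (h : ![x, y, z] ≠ 0) {c : F} (hc : c ≠ 0)
    (h0 : P.rep 0 = c * x) (h1 : P.rep 1 = c * y) (h2 : P.rep 2 = c * z) : P = pt x y z h := by
  rw [← P.mk_rep, pt, Projectivization.mk_eq_mk_iff]
  refine ⟨Units.mk0 c hc, funext fun i => ?_⟩
  fin_cases i <;> simp [Units.smul_def, h0, h1, h2]

lemma pt_mem_Dk_iff {k x y z : F} (h : ![x, y, z] ≠ 0) :
    pt x y z h ∈ Dk k ↔ k * x * y + z ^ 2 + x * z = 0 := by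
  obtain ⟨u, hu⟩ := exists_rep_pt_eq_smul x y z h
  have hscale : k * (u * x) * (u * y) + (u * z) ^ 2 + u * x * (u * z)
      = (u : F) ^ 2 * (k * x * y + z ^ 2 + x * z) := by ring
  simp [Dk, hu, Units.smul_def, hscale]

lemma inc_pt_iff (l : PG2 F) {x y z : F} (h : ![x, y, z] ≠ 0) :
    inc l (pt x y z h) ↔ l.rep 0 * x + l.rep 1 * y + l.rep 2 * z = 0 := by
  obtain ⟨u, hu⟩ := exists_rep_pt_eq_smul x y z h
  have hscale : l.rep 0 * (u * x) + l.rep 1 * (u * y) + l.rep 2 * (u * z)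
      = u * (l.rep 0 * x + l.rep 1 * y + l.rep 2 * z) := by ring
  simp [inc, hu, Units.smul_def, hscale]

noncomputable def conicParam (k : F) : Option F → PG2 F
  | none => pt 0 1 0 (vec_ne_zero 1 (by simp))
  | some z => pt 1 (-(z ^ 2 + z) / k) z (vec_ne_zero 0 (by simp))

lemma conicParam_injective (k : F) : Function.Injective (conicParam k) := by
  classical
  have hinv : Function.LeftInverse
      (fun P : PG2 F => if P.rep 0 = 0 then none else some (P.rep 2 / P.rep 0)) (conicParam k) := by
    rintro (_ | z)
    · obtain ⟨u, hu⟩ := exists_rep_pt_eq_smul (0 : F) 1 0 (vec_ne_zero 1 (by simp))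
      simp [conicParam, hu]
    · obtain ⟨u, hu⟩ := exists_rep_pt_eq_smul (1 : F) (-(z ^ 2 + z) / k) z (vec_ne_zero 0 (by simp))
      simp only [conicParam, hu]
      simp [Units.smul_def]
  exact hinv.injective

lemma Dk_eq_range_conicParam {k : F} (hk : k ≠ 0) : Dk k = Set.range (conicParam k) := by
  ext P
  constructor
  · intro hP
    change k * P.rep 0 * P.rep 1 + P.rep 2 ^ 2 + P.rep 0 * P.rep 2 = 0 at hP
    by_cases hx : P.rep 0 = 0
    · have hz : P.rep 2 = 0 := pow_eq_zero_iff two_ne_zero |>.1 (by simpa [hx] using hP)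
      have hy : P.rep 1 ≠ 0 := by simpa [hx, hz] using rep_ne_zero_coord P
      exact ⟨none, (eq_pt_of_rep_proportional P _ hy (by simp [hx]) (by simp) (by simp [hz])).symm⟩
    · refine ⟨some (P.rep 2 / P.rep 0), (eq_pt_of_rep_proportional P _ hx (by simp) ?_ ?_).symm⟩
      · field_simp
        linear_combination hP
      · field_simp
  · rintro ⟨_ | z, rfl⟩
    · simp [conicParam, pt_mem_Dk_iff]
    · rw [conicParam, pt_mem_Dk_iff]
      field_simp
      ring

lemma inc_conicParam_iff {k : F} (hk : k ≠ 0) (l : PG2 F) (o : Option F) :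
    inc l (conicParam k o) ↔
      o ∈ binaryZeros (-l.rep 1) (k * l.rep 2 - l.rep 1) (k * l.rep 0) := by
  cases o with
  | none => simp [conicParam, inc_pt_iff]
  | some z =>
    rw [conicParam, inc_pt_iff, some_mem_binaryZeros]
    constructor <;> intro h
    · field_simp at h
      linear_combination h
    · field_simp
      linear_combination h

lemma ncard_Dk_inter_line {k : F} (hk : k ≠ 0) (l : PG2 F) :
    {P ∈ Dk k | inc l P}.ncard =
      (binaryZeros (-l.rep 1) (k * l.rep 2 - l.rep 1) (k * l.rep 0)).ncard := by
  have himage : {P ∈ Dk k | inc l P} =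
      conicParam k '' binaryZeros (-l.rep 1) (k * l.rep 2 - l.rep 1) (k * l.rep 0) := by
    ext P
    simp only [Dk_eq_range_conicParam hk, Set.mem_image, Set.mem_range]
    constructor
    · rintro ⟨⟨o, rfl⟩, h⟩
      exact ⟨o, (inc_conicParam_iff hk l o).1 h, rfl⟩
    · rintro ⟨o, h, rfl⟩
      exact ⟨⟨o, rfl⟩, (inc_conicParam_iff hk l o).2 h⟩
  rw [himage, Set.ncard_image_of_injective _ (conicParam_injective k)]

lemma isOval_Dk [Fintype F] {k : F} (hk : k ≠ 0) : IsOval (Fintype.card F) (Dk k) := by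
  refine ⟨?_, fun l => ?_⟩
  · rw [Dk_eq_range_conicParam hk, ← Set.image_univ,
      Set.ncard_image_of_injective _ (conicParam_injective k), Set.ncard_univ,
      Nat.card_eq_fintype_card, Fintype.card_option]
  · rw [ncard_Dk_inter_line hk l]
    apply ncard_binaryZeros_le_two
    by_contra! ⟨h1, h2, h0⟩
    rcases rep_ne_zero_coord l with h | h | h <;> simp_all

lemma nucleus_not_mem_Dk {k : F} (hk : k ≠ 0) : pt (0 : F) 1 k (vec_ne_zero 1 (by simp)) ∉ Dk k := by
  simpa [pt_mem_Dk_iff] using hk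

/-- In characteristic `2` the discriminant of the form cut out on `l` is the square
`(k l₂ - l₁)²`, and its vanishing is incidence with `(0 : 1 : k)`. -/
lemma inc_nucleus_of_isTangent_Dk [CharP F 2] {k : F} (hk : k ≠ 0) {l : PG2 F}
    (hl : IsTangent l (Dk k)) : inc l (pt (0 : F) 1 k (vec_ne_zero 1 (by simp))) := by
  rw [IsTangent, ncard_Dk_inter_line hk l] at hl
  have hdisc := discrim_eq_zero_of_ncard_binaryZeros_eq_one hl
  have hsq : (k * l.rep 2 - l.rep 1) ^ 2 = 0 := by
    linear_combination hdisc - (2 * l.rep 1 * k * l.rep 0) * CharTwo.two_eq_zero (R := F)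
  have hB : k * l.rep 2 - l.rep 1 = 0 := pow_eq_zero_iff two_ne_zero |>.1 hsq
  rw [inc_pt_iff]
  linear_combination hB + l.rep 1 * CharTwo.two_eq_zero (R := F)

lemma Dk_inter_Dk [CharP F 2] {a b : F} (ha : a ≠ 0) (hab : a ≠ b) :
    Dk a ∩ Dk b = {pt (1 : F) 0 0 (vec_ne_zero 0 (by simp)), pt (0 : F) 1 0 (vec_ne_zero 1 (by simp)),
      pt (1 : F) 0 1 (vec_ne_zero 0 (by simp))} := by
  have h2 : (2 : F) = 0 := CharTwo.two_eq_zero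
  ext P
  simp only [Set.mem_inter_iff, Set.mem_insert_iff, Set.mem_singleton_iff]
  constructor
  · rintro ⟨hPa, hPb⟩
    rw [Dk_eq_range_conicParam ha] at hPa
    obtain ⟨_ | z, rfl⟩ := hPa
    · exact Or.inr (Or.inl rfl)
    rw [conicParam] at hPb ⊢
    rw [pt_mem_Dk_iff] at hPb
    have hz : z * (z + 1) = 0 := by
      have : (a - b) * (z * (z + 1)) = 0 := by
        field_simp at hPb
        linear_combination hPb
      exact (mul_eq_zero.1 this).resolve_left (sub_ne_zero.2 hab)
    rcases mul_eq_zero.1 hz with rfl | hz1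
    · left
      congr 1
      simp
    · right; right
      obtain rfl : z = 1 := by linear_combination hz1 - h2
      congr 1
      linear_combination -h2 / a
  · rintro (rfl | rfl | rfl) <;> constructor <;> simp [pt_mem_Dk_iff, one_add_one_eq_two, h2]

end Conic

/-- In `PG(2,q)` with `q` even and `k ≠ 0`, the conic `D_k = V(kxy + z² + xz)` is
nondegenerate with nucleus `(0 : 1 : k)`, and two distinct such conics meet exactly in the
three points `(1:0:0), (0:1:0), (1:0:1)`. -/
theorem Dk_nucleus_and_intersection {F : Type} [Field F] [Fintype F] {q : ℕ}
    (hq : Fintype.card F = q) (heven : Even q) :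
    (∀ k : F, k ≠ 0 → IsOval q (Dk k) ∧
      pt (0 : F) 1 k (vec_ne_zero 1 (by simp)) ∉ Dk k ∧
      ∀ l : PG2 F, IsTangent l (Dk k) →
        inc l (pt (0 : F) 1 k (vec_ne_zero 1 (by simp)))) ∧
    ∀ a b : F, a ≠ 0 → b ≠ 0 → a ≠ b →
      Dk a ∩ Dk b = {pt (1 : F) 0 0 (vec_ne_zero 0 (by simp)), pt (0 : F) 1 0 (vec_ne_zero 1 (by simp)), pt (1 : F) 0 1 (vec_ne_zero 0 (by simp))} := by
  subst hq
  have : CharP F 2 := charP_two_of_even_card heven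
  exact ⟨fun k hk => ⟨isOval_Dk hk, nucleus_not_mem_Dk hk, fun l => inc_nucleus_of_isTangent_Dk hk⟩,
    fun a b ha _ hab => Dk_inter_Dk ha hab⟩
end

section
/- In PG(2,q) with q odd, let C_a = V(xy + az²) and C_b = V(xy + bz²) with a, b nonzero and distinct. Then every point of C_b not on C_a is exterior to C_a if a(a − b) is a nonzero square in GF(q), and interior to C_a if a(a − b) is a non-square. -/
/-- The conic `C_k = V(xy + kz²)`. -/
def Ck {F : Type} [Field F] (k : F) : Set (PG2 F) :=
  {P | P.rep 0 * P.rep 1 + k * P.rep 2 ^ 2 = 0}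

/-- A point `P` not on the point set `S` is exterior to `S` if it lies on exactly two
tangent lines of `S`. -/
def ExteriorTo {F : Type} [Field F] (P : PG2 F) (S : Set (PG2 F)) : Prop :=
  P ∉ S ∧ {l : PG2 F | IsTangent l S ∧ inc l P}.ncard = 2

/-- A point `P` not on the point set `S` is interior to `S` if it lies on no tangent line
of `S`. -/
def InteriorTo {F : Type} [Field F] (P : PG2 F) (S : Set (PG2 F)) : Prop :=
  P ∉ S ∧ ∀ l : PG2 F, IsTangent l S → ¬ inc l P

open Projectivization

section Incidence

variable {F : Type} [Field F]

lemma inc_mk_mk (v w : Fin 3 → F) (hv : v ≠ 0) (hw : w ≠ 0) :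
    inc (mk F v hv) (mk F w hw) ↔ v ⬝ᵥ w = 0 := by
  obtain ⟨c, hc⟩ := exists_smul_eq_mk_rep F v hv
  obtain ⟨d, hd⟩ := exists_smul_eq_mk_rep F w hw
  have key : (mk F v hv).rep ⬝ᵥ (mk F w hw).rep = (c * d : F) * (v ⬝ᵥ w) := by
    rw [← hc, ← hd]
    simp only [Units.smul_def, smul_dotProduct, dotProduct_smul, smul_eq_mul]
    ring
  rw [inc, ← Fin.sum_univ_three (fun i => (mk F v hv).rep i * (mk F w hw).rep i)]
  change (mk F v hv).rep ⬝ᵥ (mk F w hw).rep = 0 ↔ _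
  rw [key, mul_eq_zero, or_iff_right (mul_ne_zero c.ne_zero d.ne_zero)]

lemma inc_pt_pt {u v w x y z : F} (hl : ![u, v, w] ≠ 0) (hP : ![x, y, z] ≠ 0) :
    inc (pt u v w hl) (pt x y z hP) ↔ u * x + v * y + w * z = 0 := by
  simp [pt, inc_mk_mk, dotProduct, Fin.sum_univ_three, add_assoc]

lemma mk_mem_Ck (k : F) (v : Fin 3 → F) (hv : v ≠ 0) :
    mk F v hv ∈ Ck k ↔ v 0 * v 1 + k * v 2 ^ 2 = 0 := by
  obtain ⟨c, hc⟩ := exists_smul_eq_mk_rep F v hv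
  have key : ∀ i, (mk F v hv).rep i = c * v i := fun i => by
    rw [← hc, Units.smul_def, Pi.smul_apply, smul_eq_mul]
  simp only [Ck, Set.mem_ofPred_eq, key]
  rw [show c * v 0 * (c * v 1) + k * (c * v 2) ^ 2 = (c : F) ^ 2 * (v 0 * v 1 + k * v 2 ^ 2) by
    ring, mul_eq_zero, or_iff_right (pow_ne_zero 2 c.ne_zero)]

lemma pt_mem_Ck {k x y z : F} (h : ![x, y, z] ≠ 0) :
    pt x y z h ∈ Ck k ↔ x * y + k * z ^ 2 = 0 :=
  mk_mem_Ck k _ h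

lemma pt_eq_pt_iff {x y z x' y' z' : F} (h : ![x, y, z] ≠ 0) (h' : ![x', y', z'] ≠ 0) :
    pt x y z h = pt x' y' z' h' ↔ ∃ c : F, x = c * x' ∧ y = c * y' ∧ z = c * z' := by
  rw [pt, pt, mk_eq_mk_iff']
  simp [funext_iff, Fin.forall_fin_succ, eq_comm]

lemma exists_eq_pt (P : PG2 F) : ∃ (x y z : F) (h : ![x, y, z] ≠ 0), P = pt x y z h := by
  induction P using Projectivization.ind with
  | h v hv =>
    have hv' : ![v 0, v 1, v 2] = v := by ext i; fin_cases i <;> rfl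
    exact ⟨v 0, v 1, v 2, hv' ▸ hv, by simp only [pt, hv']⟩

end Incidence

noncomputable def pointX (F : Type) [Field F] : PG2 F := pt 1 0 0 (vec_ne_zero 0 one_ne_zero)

noncomputable def lineY (F : Type) [Field F] : PG2 F := pt 0 1 0 (vec_ne_zero 1 one_ne_zero)

section Conic

variable {F : Type} [Field F] {a : F}

noncomputable def conicPoint (a t : F) (ha : a ≠ 0) : PG2 F :=
  pt (t ^ 2) (-a) t (vec_ne_zero 1 (neg_ne_zero.2 ha))

/-- The polar of `conicPoint a t` with respect to `C_a`. -/
noncomputable def tangentLine (a t : F) (ha : a ≠ 0) : PG2 F :=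
  pt (-a) (t ^ 2) (2 * a * t) (vec_ne_zero 0 (neg_ne_zero.2 ha))

lemma conicPoint_injective (ha : a ≠ 0) : Function.Injective (conicPoint a · ha) := by
  intro t t' h
  obtain ⟨c, -, hy, hz⟩ := (pt_eq_pt_iff _ _).1 h
  have hc : c = 1 := by
    have : (c - 1) * a = 0 := by linear_combination hy
    exact sub_eq_zero.1 ((mul_eq_zero.1 this).resolve_right ha)
  rw [hz, hc, one_mul]

lemma tangentLine_injective [NeZero (2 : F)] (ha : a ≠ 0) :
    Function.Injective (tangentLine a · ha) := by
  intro t t' h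
  obtain ⟨c, hx, -, hz⟩ := (pt_eq_pt_iff _ _).1 h
  have hc : c = 1 := by
    have : (c - 1) * a = 0 := by linear_combination hx
    exact sub_eq_zero.1 ((mul_eq_zero.1 this).resolve_right ha)
  rw [hc, one_mul] at hz
  exact mul_left_cancel₀ (mul_ne_zero two_ne_zero ha) hz

lemma pointX_ne_conicPoint (ha : a ≠ 0) (t : F) : pointX F ≠ conicPoint a t ha := by
  intro h
  obtain ⟨c, hx, hy, -⟩ := (pt_eq_pt_iff _ _).1 h
  have : c * a = 0 := by linear_combination hy
  rw [(mul_eq_zero.1 this).resolve_right ha, zero_mul] at hx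
  exact one_ne_zero hx

lemma mem_Ck_iff (ha : a ≠ 0) (P : PG2 F) :
    P ∈ Ck a ↔ P = pointX F ∨ ∃ t, P = conicPoint a t ha := by
  constructor
  · obtain ⟨x, y, z, h, rfl⟩ := exists_eq_pt P
    rw [pt_mem_Ck]
    intro hP
    by_cases hy : y = 0
    · have hz : z = 0 := by
        subst hy
        have : a * z ^ 2 = 0 := by linear_combination hP
        exact pow_eq_zero_iff two_ne_zero |>.1 ((mul_eq_zero.1 this).resolve_left ha)
      exact .inl ((pt_eq_pt_iff _ _).2 ⟨x, by ring, by simp [hy], by simp [hz]⟩)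
    · refine .inr ⟨-(a * z / y), (pt_eq_pt_iff _ _).2 ⟨-(y / a), ?_, ?_, ?_⟩⟩
      · field_simp
        linear_combination hP
      · field_simp
      · field_simp
  · rintro (rfl | ⟨t, rfl⟩)
    · rw [pointX, pt_mem_Ck]; ring
    · rw [conicPoint, pt_mem_Ck]; ring

lemma inc_pointX_iff {u v w : F} (hl : ![u, v, w] ≠ 0) :
    inc (pt u v w hl) (pointX F) ↔ u = 0 := by
  simp [pointX, inc_pt_pt]

lemma inc_conicPoint_iff {u v w : F} (ha : a ≠ 0) (hl : ![u, v, w] ≠ 0) (t : F) :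
    inc (pt u v w hl) (conicPoint a t ha) ↔ u * t ^ 2 + w * t - a * v = 0 := by
  rw [conicPoint, inc_pt_pt]; ring_nf

lemma inter_lineY (ha : a ≠ 0) : {P ∈ Ck a | inc (lineY F) P} = {pointX F} := by
  ext P
  rw [Set.mem_sep_iff, mem_Ck_iff ha, Set.mem_singleton_iff]
  constructor
  · rintro ⟨hP | ⟨t, rfl⟩, hinc⟩
    · exact hP
    · rw [lineY, inc_conicPoint_iff] at hinc
      exact absurd (by linear_combination -hinc) ha
  · rintro rfl
    exact ⟨.inl rfl, by simp [lineY, inc_pointX_iff]⟩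

lemma inter_tangentLine (ha : a ≠ 0) (t : F) :
    {P ∈ Ck a | inc (tangentLine a t ha) P} = {conicPoint a t ha} := by
  ext P
  rw [Set.mem_sep_iff, mem_Ck_iff ha, Set.mem_singleton_iff]
  constructor
  · rintro ⟨rfl | ⟨s, rfl⟩, hinc⟩
    · rw [tangentLine, inc_pointX_iff] at hinc
      exact absurd (neg_eq_zero.1 hinc) ha
    · rw [tangentLine, inc_conicPoint_iff] at hinc
      have : a * (s - t) ^ 2 = 0 := by linear_combination -hinc
      rw [sub_eq_zero.1 (pow_eq_zero_iff two_ne_zero |>.1 ((mul_eq_zero.1 this).resolve_left ha))]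
  · rintro rfl
    exact ⟨.inr ⟨t, rfl⟩, by rw [tangentLine, inc_conicPoint_iff]; ring⟩

end Conic

section Tangents

variable {F : Type} [Field F] {a : F}

lemma eq_lineY_of_inter_eq_pointX (ha : a ≠ 0) {l : PG2 F}
    (hl : {P ∈ Ck a | inc l P} = {pointX F}) : l = lineY F := by
  obtain ⟨u, v, w, h, rfl⟩ := exists_eq_pt l
  have mem_iff : ∀ P, P ∈ Ck a ∧ inc (pt u v w h) P ↔ P = pointX F :=
    fun P => Set.ext_iff.1 hl P
  have hu : u = 0 := (inc_pointX_iff h).1 ((mem_iff _).2 rfl).2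
  have hw : w = 0 := by
    by_contra hw
    refine pointX_ne_conicPoint ha (a * v / w) ((mem_iff _).1 ⟨?_, ?_⟩).symm
    · exact (mem_Ck_iff ha _).2 (.inr ⟨_, rfl⟩)
    rw [inc_conicPoint_iff]
    field_simp
    simp [hu]
  exact (pt_eq_pt_iff _ _).2 ⟨v, by simp [hu], by ring, by simp [hw]⟩

lemma eq_tangentLine_of_inter_eq_conicPoint (ha : a ≠ 0) {l : PG2 F} {t : F}
    (hl : {P ∈ Ck a | inc l P} = {conicPoint a t ha}) : l = tangentLine a t ha := by
  obtain ⟨u, v, w, h, rfl⟩ := exists_eq_pt l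
  have mem_iff : ∀ P, P ∈ Ck a ∧ inc (pt u v w h) P ↔ P = conicPoint a t ha :=
    fun P => Set.ext_iff.1 hl P
  have hinc : u * t ^ 2 + w * t - a * v = 0 :=
    (inc_conicPoint_iff ha h t).1 ((mem_iff _).2 rfl).2
  have hu : u ≠ 0 := fun hu =>
    pointX_ne_conicPoint ha t <| (mem_iff _).1
      ⟨(mem_Ck_iff ha _).2 (.inl rfl), (inc_pointX_iff h).2 hu⟩
  -- the other root `-w/u - t` of `u s² + w s - a v` also gives a point of `l ∩ C_a`
  have hroot : -w / u - t = t := by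
    refine conicPoint_injective ha ((mem_iff _).1 ⟨(mem_Ck_iff ha _).2 (.inr ⟨_, rfl⟩), ?_⟩)
    rw [inc_conicPoint_iff]
    field_simp
    linear_combination u * hinc
  have hw : w = -2 * u * t := by
    field_simp at hroot
    linear_combination -hroot
  refine (pt_eq_pt_iff _ _).2 ⟨-(u / a), ?_, ?_, ?_⟩
  · field_simp
  · field_simp
    linear_combination -hinc + t * hw
  · field_simp
    linear_combination hw

lemma isTangent_Ck_iff (ha : a ≠ 0) (l : PG2 F) :
    IsTangent l (Ck a) ↔ l = lineY F ∨ ∃ t, l = tangentLine a t ha := by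
  constructor
  · intro hl
    obtain ⟨P, hP⟩ := Set.ncard_eq_one.1 hl
    have hPa : P ∈ Ck a := (Set.ext_iff.1 hP P).2 rfl |>.1
    rcases (mem_Ck_iff ha P).1 hPa with rfl | ⟨t, rfl⟩
    · exact .inl (eq_lineY_of_inter_eq_pointX ha hP)
    · exact .inr ⟨t, eq_tangentLine_of_inter_eq_conicPoint ha hP⟩
  · rintro (rfl | ⟨t, rfl⟩)
    · rw [IsTangent, inter_lineY ha, Set.ncard_singleton]
    · rw [IsTangent, inter_tangentLine ha, Set.ncard_singleton]

end Tangents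

lemma ncard_setOf_quadratic_eq_zero {K : Type*} [Field K] [NeZero (2 : K)] {a b c s : K}
    (ha : a ≠ 0) (hs : s ≠ 0) (h : discrim a b c = s * s) :
    {x | a * (x * x) + b * x + c = 0}.ncard = 2 := by
  have hroots : {x | a * (x * x) + b * x + c = 0} = {(-b + s) / (2 * a), (-b - s) / (2 * a)} := by
    ext x
    exact quadratic_eq_zero_iff ha h x
  rw [hroots, Set.ncard_pair]
  intro heq
  rw [div_left_inj' (mul_ne_zero two_ne_zero ha)] at heq
  exact hs ((mul_eq_zero.1 (by linear_combination heq : (2 : K) * s = 0)).resolve_left two_ne_zero)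

section Criterion

variable {F : Type} [Field F] {a b : F}

lemma inc_tangentLine_iff {x y z : F} (ha : a ≠ 0) (h : ![x, y, z] ≠ 0) (hx : x ≠ 0)
    (hP : x * y + b * z ^ 2 = 0) (t : F) :
    inc (tangentLine a t ha) (pt x y z h) ↔
      b * z ^ 2 * (t * t) + -2 * a * x * z * t + a * x ^ 2 = 0 := by
  rw [tangentLine, inc_pt_pt]
  constructor
  · intro hinc
    linear_combination -x * hinc + t ^ 2 * hP
  · intro hq
    refine (mul_eq_zero.1 ?_).resolve_left hx
    linear_combination -hq + t ^ 2 * hP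

lemma exists_setOf_isTangent_inc_eq_image (ha : a ≠ 0) (hb : b ≠ 0) {P : PG2 F}
    (hPb : P ∈ Ck b) (hPa : P ∉ Ck a) :
    ∃ x z : F, x ≠ 0 ∧ z ≠ 0 ∧ {l | IsTangent l (Ck a) ∧ inc l P} =
      (tangentLine a · ha) '' {t | b * z ^ 2 * (t * t) + -2 * a * x * z * t + a * x ^ 2 = 0} := by
  obtain ⟨x, y, z, h, rfl⟩ := exists_eq_pt P
  rw [pt_mem_Ck] at hPb hPa
  have hz : z ≠ 0 := fun hz => hPa (by simpa [hz] using hPb)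
  have hxy : x * y ≠ 0 := by
    rw [eq_neg_of_add_eq_zero_left hPb]
    exact neg_ne_zero.2 (mul_ne_zero hb (pow_ne_zero 2 hz))
  have hx := left_ne_zero_of_mul hxy
  refine ⟨x, z, hx, hz, Set.ext fun l => ?_⟩
  simp only [Set.mem_ofPred_eq, Set.mem_image, isTangent_Ck_iff ha]
  constructor
  · rintro ⟨rfl | ⟨t, rfl⟩, hinc⟩
    · exact absurd (by simpa [lineY, inc_pt_pt] using hinc) (right_ne_zero_of_mul hxy)
    · exact ⟨t, (inc_tangentLine_iff ha h hx hPb t).1 hinc, rfl⟩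
  · rintro ⟨t, ht, rfl⟩
    exact ⟨.inr ⟨t, rfl⟩, (inc_tangentLine_iff ha h hx hPb t).2 ht⟩

lemma discrim_tangent_quadratic (x z : F) :
    discrim (b * z ^ 2) (-2 * a * x * z) (a * x ^ 2) = (2 * x * z) ^ 2 * (a * (a - b)) := by
  unfold discrim; ring

lemma exteriorTo_of_isSquare [NeZero (2 : F)] (ha : a ≠ 0) (hb : b ≠ 0) {P : PG2 F}
    (hPb : P ∈ Ck b) (hPa : P ∉ Ck a) (hne : a * (a - b) ≠ 0) (hsq : IsSquare (a * (a - b))) :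
    ExteriorTo P (Ck a) := by
  obtain ⟨r, hr⟩ := hsq
  obtain ⟨x, z, hx, hz, htangents⟩ := exists_setOf_isTangent_inc_eq_image ha hb hPb hPa
  refine ⟨hPa, ?_⟩
  have hr0 : r ≠ 0 := fun hr0 => hne (by rw [hr, hr0, mul_zero])
  rw [htangents, Set.ncard_image_of_injective _ (tangentLine_injective ha)]
  refine ncard_setOf_quadratic_eq_zero (s := 2 * x * z * r)
    (mul_ne_zero hb (pow_ne_zero 2 hz)) ?_ ?_
  · exact mul_ne_zero (mul_ne_zero (mul_ne_zero two_ne_zero hx) hz) hr0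
  · rw [discrim_tangent_quadratic, hr]; ring

lemma interiorTo_of_not_isSquare [NeZero (2 : F)] (ha : a ≠ 0) (hb : b ≠ 0) {P : PG2 F}
    (hPb : P ∈ Ck b) (hPa : P ∉ Ck a) (hns : ¬ IsSquare (a * (a - b))) :
    InteriorTo P (Ck a) := by
  obtain ⟨x, z, hx, hz, htangents⟩ := exists_setOf_isTangent_inc_eq_image ha hb hPb hPa
  refine ⟨hPa, fun l hl hinc => ?_⟩
  have hl' : l ∈ {l | IsTangent l (Ck a) ∧ inc l P} := ⟨hl, hinc⟩
  rw [htangents] at hl'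
  obtain ⟨t, ht, -⟩ := hl'
  refine quadratic_ne_zero_of_discrim_ne_sq (fun s hs => hns ⟨s / (2 * x * z), ?_⟩) t ht
  have h2xz : 2 * x * z ≠ 0 := mul_ne_zero (mul_ne_zero two_ne_zero hx) hz
  rw [discrim_tangent_quadratic] at hs
  field_simp
  linear_combination hs

end Criterion

theorem exterior_interior_criterion_general {F : Type} [Field F] [Fintype F]
    (hodd : Odd (Fintype.card F)) (a b : F) (ha : a ≠ 0) (hb : b ≠ 0) :
    ∀ P : PG2 F, P ∈ Ck b → P ∉ Ck a →
      ((a * (a - b) ≠ 0 ∧ IsSquare (a * (a - b))) → ExteriorTo P (Ck a)) ∧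
      (¬ IsSquare (a * (a - b)) → InteriorTo P (Ck a)) := by
  have : NeZero (2 : F) := ⟨Ring.two_ne_zero fun hF => by
    simp [FiniteField.even_card_iff_char_two.1 hF, Nat.odd_iff] at hodd⟩
  intro P hPb hPa
  exact ⟨fun ⟨hne, hsq⟩ => exteriorTo_of_isSquare ha hb hPb hPa hne hsq,
    interiorTo_of_not_isSquare ha hb hPb hPa⟩

/-- In `PG(2,q)` with `q` odd, every point of `C_b = V(xy + bz²)` not on `C_a = V(xy + az²)`
is exterior to `C_a` if `a(a − b)` is a nonzero square, and interior to `C_a` if `a(a − b)`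
is a non-square. -/
theorem exterior_interior_criterion {F : Type} [Field F] [Fintype F]
    (hodd : Odd (Fintype.card F)) (a b : F) (ha : a ≠ 0) (hb : b ≠ 0) (hab : a ≠ b) :
    ∀ P : PG2 F, P ∈ Ck b → P ∉ Ck a →
      ((a * (a - b) ≠ 0 ∧ IsSquare (a * (a - b))) → ExteriorTo P (Ck a)) ∧
      (¬ IsSquare (a * (a - b)) → InteriorTo P (Ck a)) :=
  exterior_interior_criterion_general hodd a b ha hb
end
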